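/- Define S(n) := Σ_{i=0}^{n−1} ((−1)^{n−i−1}/(2n−2i−1)) · (2n−i)_{2i}/(i!)^2. Then for every positive integer n, (2n+1)^2 · S(n+1) = 3·(6n−1)(6n+1) · S(n). -/

import Mathlib

/-!
Creative telescoping. Let `F(n, i)` be the `i`-th summand of `S(n)`. Zeilberger's algorithm
produces a certificate `G` with
  `(2n+1)² F(n+1, i) - 3(6n-1)(6n+1) F(n, i) = G(n, i+1) - G(n, i)`,
which, after dividing both sides by a common hypergeometric factor (a signed multiple of
`(2n-i+2)_{2i-2} / (i-1)!²`), is an identity of rational functions in `n` and `i`.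
Summing over `0 ≤ i ≤ n` telescopes to `G(n, n+1) - G(n, 0)`. Here `G(n, 0) = 0`, and since `S(n+1)` has one more term than `S(n)`,
the extra term `-3(6n-1)(6n+1) F(n, n)` on the left is exactly `G(n, n+1)`.
-/

/-- Shifted factorial `(a)_k = a(a+1)···(a+k-1)`. -/
def shifted (a : ℚ) (k : ℕ) : ℚ := ∏ t ∈ Finset.range k, (a + t)

/-- `S(n)` from the paper. -/
def Sfun (n : ℕ) : ℚ :=
  ∑ i ∈ Finset.range n,
    ((-1 : ℚ)^(n - i - 1) / (2*(n:ℚ) - 2*(i:ℚ) - 1)) *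
      (shifted (2*(n:ℚ) - (i:ℚ)) (2*i) / (Nat.factorial i : ℚ)^2)

open Nat

lemma shifted_succ (a : ℚ) (k : ℕ) : shifted a (k + 1) = shifted a k * (a + k) :=
  Finset.prod_range_succ _ _

lemma shifted_succ' (a : ℚ) (k : ℕ) : shifted a (k + 1) = a * shifted (a + 1) k := by
  simp only [shifted, Finset.prod_range_succ', Nat.cast_succ, Nat.cast_zero, add_zero]
  rw [mul_comm]
  congr 1
  exact Finset.prod_congr rfl fun _ _ => by ring

lemma mul_shifted_add_one (a : ℚ) (k : ℕ) : a * shifted (a + 1) k = shifted a k * (a + k) := by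
  rw [← shifted_succ', shifted_succ]

/-- The summand of `Sfun n`; the sign `(-1)^(n+i+1)` agrees with `(-1)^(n-i-1)` for `i < n`
and avoids truncated subtraction. -/
def Sterm (n i : ℕ) : ℚ :=
  (-1) ^ (n + i + 1) / (2 * n - 2 * i - 1) * (shifted (2 * n - i) (2 * i) / (i ! : ℚ) ^ 2)

def wzPoly (n i : ℚ) : ℚ :=
  3 * (i - 1) * (2 * i - 1) * (2 * i + 1) + n * (56 * i ^ 3 - 108 * i ^ 2 + 16 * i + 24)
    + n ^ 2 * (-264 * i ^ 2 + 228 * i + 44) + n ^ 3 * (432 * i - 96) - 224 * n ^ 4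

/-- The certificate `G(n, i)` produced by Zeilberger's algorithm. -/
def wzCert (n : ℕ) : ℕ → ℚ
  | 0 => 0
  | i + 1 => wzPoly n (i + 1) * (-1) ^ (n + i + 1) * shifted (2 * n - i + 1) (2 * i) /
      (n * (2 * n - 2 * i - 1) * (2 * n - 2 * i - 3) * (i ! : ℚ) ^ 2)

lemma sfun_eq_sum_sterm (n : ℕ) : Sfun n = ∑ i ∈ Finset.range n, Sterm n i := by
  refine Finset.sum_congr rfl fun i hi => ?_
  have hin : i < n := Finset.mem_range.mp hi
  rw [Sterm, show n + i + 1 = (n - i - 1) + 2 * (i + 1) by omega, pow_add, pow_mul]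
  norm_num

lemma wz_step_zero {n : ℕ} (hn : 1 ≤ n) :
    (2 * n + 1) ^ 2 * Sterm (n + 1) 0 - 3 * (6 * n - 1) * (6 * n + 1) * Sterm n 0
      = wzCert n 1 - wzCert n 0 := by
  have h0 : (n : ℚ) ≠ 0 := by exact_mod_cast (by omega : n ≠ 0)
  have h1 : (2 * n - 1 : ℚ) ≠ 0 := by exact_mod_cast (by omega : (2 * n - 1 : ℤ) ≠ 0)
  have h1' : (2 * (n + 1) - 1 : ℚ) ≠ 0 := by
    exact_mod_cast (by omega : (2 * (n + 1) - 1 : ℤ) ≠ 0)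
  have h3 : (2 * n - 3 : ℚ) ≠ 0 := by exact_mod_cast (by omega : (2 * n - 3 : ℤ) ≠ 0)
  norm_num [Sterm, wzCert, wzPoly, shifted, pow_succ]
  field_simp
  ring

lemma wz_step_succ {n : ℕ} (hn : 1 ≤ n) (j : ℕ) :
    (2 * n + 1) ^ 2 * Sterm (n + 1) (j + 1) - 3 * (6 * n - 1) * (6 * n + 1) * Sterm n (j + 1)
      = wzCert n (j + 2) - wzCert n (j + 1) := by
  have h0 : (n : ℚ) ≠ 0 := by exact_mod_cast (by omega : n ≠ 0)
  have h1 : (2 * (n - j) - 1 : ℚ) ≠ 0 := by exact_mod_cast (by omega : (2 * (n - j) - 1 : ℤ) ≠ 0)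
  have h3 : (2 * (n - j) - 3 : ℚ) ≠ 0 := by exact_mod_cast (by omega : (2 * (n - j) - 3 : ℤ) ≠ 0)
  have h5 : (2 * (n - j) - 5 : ℚ) ≠ 0 := by exact_mod_cast (by omega : (2 * (n - j) - 5 : ℤ) ≠ 0)
  have hj : (j + 1 : ℚ) ≠ 0 := by positivity
  have hf : (j ! : ℚ) ≠ 0 := by positivity
  have hfact : ((j + 1)! : ℚ) = (j + 1) * j ! := by push_cast [factorial_succ]; ring
  have hX1 : shifted (2 * ↑(n + 1) - ↑(j + 1)) (2 * (j + 1))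
      = shifted (2 * n - j + 1) (2 * j) * (2 * n + j + 1) * (2 * n + j + 2) := by
    rw [show 2 * (j + 1) = 2 * j + 1 + 1 by ring, shifted_succ, shifted_succ,
      show 2 * ((n + 1 : ℕ) : ℚ) - (j + 1 : ℕ) = 2 * n - j + 1 by push_cast; ring]
    push_cast
    ring
  have hX2 : shifted (2 * n - ↑(j + 1)) (2 * (j + 1))
      = (2 * n - j - 1) * (2 * n - j) * shifted (2 * n - j + 1) (2 * j) := by
    rw [show 2 * (j + 1) = 2 * j + 1 + 1 by ring, shifted_succ', shifted_succ',
      show (2 * n - ((j + 1 : ℕ) : ℚ)) + 1 + 1 = 2 * n - j + 1 by push_cast; ring]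
    push_cast
    ring
  have hX3 : shifted (2 * n - ↑(j + 1) + 1) (2 * (j + 1))
      = (2 * n - j) * shifted (2 * n - j + 1) (2 * j) * (2 * n + j + 1) := by
    rw [show 2 * (j + 1) = 2 * j + 1 + 1 by ring, shifted_succ, shifted_succ',
      show (2 * n - ((j + 1 : ℕ) : ℚ)) + 1 + 1 = 2 * n - j + 1 by push_cast; ring]
    push_cast
    ring
  have hs1 : (-1 : ℚ) ^ (n + 1 + (j + 1) + 1) = (-1) ^ (n + j + 1) := by
    rw [show n + 1 + (j + 1) + 1 = n + j + 1 + 2 by ring, pow_add]; norm_num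
  have hs2 : (-1 : ℚ) ^ (n + (j + 1) + 1) = -(-1) ^ (n + j + 1) := by
    rw [show n + (j + 1) + 1 = n + j + 1 + 1 by ring, pow_succ]; ring
  simp only [Sterm, wzCert, wzPoly, hX1, hX2, hX3, hfact, hs1, hs2]
  push_cast
  rw [show (2 * (n + 1) - 2 * (j + 1) - 1 : ℚ) = 2 * n - 2 * j - 1 by ring,
    show (2 * n - 2 * (j + 1) - 1 : ℚ) = 2 * n - 2 * j - 3 by ring,
    show (2 * n - 2 * (j + 1) - 3 : ℚ) = 2 * n - 2 * j - 5 by ring]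
  field_simp
  ring

lemma wz_step {n : ℕ} (hn : 1 ≤ n) (i : ℕ) :
    (2 * n + 1) ^ 2 * Sterm (n + 1) i - 3 * (6 * n - 1) * (6 * n + 1) * Sterm n i
      = wzCert n (i + 1) - wzCert n i := by
  cases i with
  | zero => exact wz_step_zero hn
  | succ j => exact wz_step_succ hn j

lemma wzCert_succ_self {n : ℕ} (hn : 1 ≤ n) :
    wzCert n (n + 1) = -(3 * (6 * n - 1) * (6 * n + 1)) * Sterm n n := by
  have h0 : (n : ℚ) ≠ 0 := by exact_mod_cast (by omega : n ≠ 0)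
  have hf : (n ! : ℚ) ≠ 0 := by positivity
  have hY : shifted (n + 1) (2 * n) = 3 * shifted n (2 * n) :=
    mul_left_cancel₀ h0 (by rw [mul_shifted_add_one]; push_cast; ring)
  simp only [wzCert, Sterm, wzPoly]
  rw [show (2 * n - n + 1 : ℚ) = n + 1 by ring, show (2 * n - n : ℚ) = n by ring, hY]
  field_simp
  ring

theorem S_recurrence (n : ℕ) (hn : 1 ≤ n) :
    (2*(n:ℚ) + 1)^2 * Sfun (n+1) = 3 * (6*(n:ℚ) - 1) * (6*(n:ℚ) + 1) * Sfun n := by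
  have telescope : ∑ i ∈ Finset.range (n + 1),
      ((2 * n + 1) ^ 2 * Sterm (n + 1) i - 3 * (6 * n - 1) * (6 * n + 1) * Sterm n i)
        = wzCert n (n + 1) - wzCert n 0 := by
    simp only [wz_step hn]
    exact Finset.sum_range_sub _ _
  rw [Finset.sum_sub_distrib, ← Finset.mul_sum, ← Finset.mul_sum, Finset.sum_range_succ (Sterm n),
    wzCert_succ_self hn, wzCert, ← sfun_eq_sum_sterm, ← sfun_eq_sum_sterm] at telescope
  linear_combination telescope
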